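/- There exist constants C₁ > 0 and λ₀ > 0 depending only on the manifold M and the geodesic ball B such that if λ > λ₀ and u satisfies Δu + λu = 0 on B, then the zero set Z_u of u is C₁/√λ dense in B: every point of B (at distance > C₁/√λ from ∂B) lies within geodesic distance C₁/√λ of a zero of u. -/

import Mathlib

/-!
Put `w(x) = ∏ᵢ cos (μ (xᵢ - yᵢ))` with `n μ² < λ`: it is positive on the open cube of half-side
`π / (2μ)` around `y`, vanishes on its boundary and satisfies `Δw = -n μ² w`. If `u` had no zero on
the closed cube, by connectedness we may assume `u > 0` there. At a maximum point `x` of `w / u` on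
the cube, which is interior because `w / u` vanishes on the boundary, `w(x) u - u(x) w` has a local
minimum, so its Laplacian there is nonnegative:
`0 ≤ w(x) Δu(x) - u(x) Δw(x) = (n μ² - λ) u(x) w(x) < 0`.
Taking `μ = √λ / (n + 1)` puts the cube, hence a zero of `u`, within distance `O(1/√λ)` of `y`.
-/

open Real Metric Set

/-- `u` is a Laplace eigenfunction: `Δu + λu = 0` on `s ⊆ ℝⁿ`. -/
def IsEigenfunctionOn {n : ℕ} (u : EuclideanSpace ℝ (Fin n) → ℝ)
    (s : Set (EuclideanSpace ℝ (Fin n))) (lam : ℝ) : Prop :=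
  ContDiffOn ℝ 2 u s ∧ ∀ x ∈ s,
    (∑ i : Fin n,
      (fderiv ℝ (fun y => fderiv ℝ u y (EuclideanSpace.single i 1)) x)
        (EuclideanSpace.single i 1)) + lam * u x = 0

open Filter Topology Function

theorem IsLocalMin.nonneg_of_hasDerivAt_of_hasDerivAt {f f' : ℝ → ℝ} {a c : ℝ}
    (hmin : IsLocalMin f a) (hf : ∀ᶠ t in 𝓝 a, HasDerivAt f (f' t) t)
    (hf' : HasDerivAt f' c a) : 0 ≤ c := by
  -- If `c < 0` the second-derivative test makes `a` a local maximum as well, so `f` is locally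
  -- constant and `c = 0`.
  by_contra! hc
  have hderiv : deriv f =ᶠ[𝓝 a] f' := hf.mono fun t ht => ht.deriv
  have hmax : IsLocalMax f a := by
    refine isLocalMax_of_deriv_deriv_neg ?_ hmin.deriv_eq_zero hf.self_of_nhds.continuousAt
    rwa [(hf'.congr_of_eventuallyEq hderiv).deriv]
  have hconst : ∀ᶠ t in 𝓝 a, f t = f a :=
    (hmin.and hmax).mono fun t ht => le_antisymm ht.2 ht.1
  have hf'_zero : f' =ᶠ[𝓝 a] fun _ => 0 := by
    filter_upwards [hconst.eventually_nhds, hf] with t hconst_t hft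
    exact hft.unique ((hasDerivAt_const t (f a)).congr_of_eventuallyEq hconst_t)
  exact hc.ne (hf'.unique ((hasDerivAt_const a 0).congr_of_eventuallyEq hf'_zero))

section SecondDerivative

variable {E : Type*} [NormedAddCommGroup E] [NormedSpace ℝ E] {x : E}

theorem ContDiffAt.differentiableAt_fderiv_apply {F : Type*} [NormedAddCommGroup F]
    [NormedSpace ℝ F] {f : E → F} (hf : ContDiffAt ℝ 2 f x) (v : E) :
    DifferentiableAt ℝ (fun z => fderiv ℝ f z v) x :=
  ((hf.fderiv_right (m := 1) (by norm_num)).differentiableAt (by norm_num)).clm_apply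
    (differentiableAt_const v)

theorem IsLocalMin.fderiv_fderiv_apply_nonneg {φ : E → ℝ} (hmin : IsLocalMin φ x)
    (hφ : ContDiffAt ℝ 2 φ x) (v : E) : 0 ≤ fderiv ℝ (fun z => fderiv ℝ φ z v) x v := by
  have hline (t : ℝ) : HasDerivAt (fun t : ℝ => x + t • v) v t := by
    simpa using ((hasDerivAt_id t).smul_const v).const_add x
  have hcont : ContinuousAt (fun t : ℝ => x + t • v) 0 := by fun_prop
  have hx : x + (0 : ℝ) • v = x := by simp
  refine IsLocalMin.nonneg_of_hasDerivAt_of_hasDerivAt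
    (f' := fun t => fderiv ℝ φ (x + t • v) v) (IsLocalMin.comp_continuous (hx ▸ hmin) hcont) ?_ ?_
  · filter_upwards [hcont.eventually (hx ▸ hφ.eventually (by simp))] with t ht
    exact ((ht.differentiableAt (by norm_num)).hasFDerivAt).comp_hasDerivAt t (hline t)
  · exact (hφ.differentiableAt_fderiv_apply v).hasFDerivAt.comp_hasDerivAt_of_eq 0 (hline 0)
      hx.symm

theorem fderiv_fderiv_apply_const_mul_sub {u w : E → ℝ} (hu : ContDiffAt ℝ 2 u x)
    (hw : ContDiffAt ℝ 2 w x) (α β : ℝ) (v : E) :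
    fderiv ℝ (fun z => fderiv ℝ (fun y => α * u y - β * w y) z v) x v =
      α * fderiv ℝ (fun z => fderiv ℝ u z v) x v -
        β * fderiv ℝ (fun z => fderiv ℝ w z v) x v := by
  have hfirst : (fun z => fderiv ℝ (fun y => α * u y - β * w y) z v) =ᶠ[𝓝 x]
      fun z => α * fderiv ℝ u z v - β * fderiv ℝ w z v := by
    filter_upwards [hu.eventually (by simp), hw.eventually (by simp)] with z huz hwz
    have huz' := huz.differentiableAt (by norm_num)
    have hwz' := hwz.differentiableAt (by norm_num)
    rw [fderiv_fun_sub (huz'.const_mul α) (hwz'.const_mul β), fderiv_const_mul huz',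
      fderiv_const_mul hwz']
    simp
  have hu' := hu.differentiableAt_fderiv_apply v
  have hw' := hw.differentiableAt_fderiv_apply v
  rw [hfirst.fderiv_eq, fderiv_fun_sub (hu'.const_mul α) (hw'.const_mul β),
    fderiv_const_mul hu', fderiv_const_mul hw']
  simp

end SecondDerivative

section ProductOfCosines

variable {ι : Type*} [Fintype ι]

theorem prod_update_apply_eq_mul_prod_erase [DecidableEq ι] {α M : Type*} [CommMonoid M]
    (f : ι → α → M) (k : ι) (g : α → M) (x : ι → α) :
    ∏ i, update f k g i (x i) = g (x k) * ∏ i ∈ Finset.univ.erase k, f i (x i) := by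
  rw [← Finset.mul_prod_erase _ _ (Finset.mem_univ k), update_self]
  congr 1
  exact Finset.prod_congr rfl fun i hi => by rw [update_of_ne (Finset.ne_of_mem_erase hi)]

theorem fderiv_prod_comp_apply_single [DecidableEq ι] {f f' : ι → ℝ → ℝ}
    (hf : ∀ i t, HasDerivAt (f i) (f' i t) t) (x : EuclideanSpace ℝ ι) (k : ι) :
    fderiv ℝ (fun x : EuclideanSpace ℝ ι => ∏ i, f i (x i)) x (EuclideanSpace.single k 1) =
      ∏ i, update f k (f' k) i (x i) := by
  have hcoord (i : ι) : HasFDerivAt (fun x : EuclideanSpace ℝ ι => f i (x i))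
      (f' i (x i) • (EuclideanSpace.proj i : EuclideanSpace ℝ ι →L[ℝ] ℝ)) x :=
    (hf i (x i)).comp_hasFDerivAt x (EuclideanSpace.proj (𝕜 := ℝ) i).hasFDerivAt
  rw [(HasFDerivAt.finsetProd fun i _ => hcoord i).fderiv,
    prod_update_apply_eq_mul_prod_erase f k (f' k) x]
  simp [mul_comm]

noncomputable def cosProd (μ : ℝ) (y x : EuclideanSpace ℝ ι) : ℝ :=
  ∏ i, cos (μ * (x i - y i))

theorem contDiff_cosProd (μ : ℝ) (y : EuclideanSpace ℝ ι) : ContDiff ℝ 2 (cosProd μ y) := by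
  unfold cosProd
  fun_prop

theorem cosProd_self (μ : ℝ) (y : EuclideanSpace ℝ ι) : cosProd μ y y = 1 := by
  simp [cosProd]

theorem cosProd_eq_zero {μ : ℝ} (hμ : 0 < μ) {y x : EuclideanSpace ℝ ι} {k : ι}
    (hk : |x k - y k| = π / (2 * μ)) : cosProd μ y x = 0 := by
  refine Finset.prod_eq_zero (Finset.mem_univ k) ?_
  rw [← cos_abs, abs_mul, abs_of_pos hμ, hk, show μ * (π / (2 * μ)) = π / 2 by field_simp,
    cos_pi_div_two]

theorem cosProd_pos {μ : ℝ} (hμ : 0 < μ) {y x : EuclideanSpace ℝ ι}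
    (hx : ∀ i, |x i - y i| < π / (2 * μ)) : 0 < cosProd μ y x := by
  refine Finset.prod_pos fun i _ => ?_
  rw [← cos_abs, abs_mul, abs_of_pos hμ]
  refine cos_pos_of_mem_Ioo
    ⟨by linarith [pi_pos, mul_nonneg hμ.le (abs_nonneg (x i - y i))], ?_⟩
  calc μ * |x i - y i| < μ * (π / (2 * μ)) := mul_lt_mul_of_pos_left (hx i) hμ
    _ = π / 2 := by field_simp

theorem cosProd_second_partial [DecidableEq ι] (μ : ℝ) (y x : EuclideanSpace ℝ ι) (k : ι) :
    fderiv ℝ (fun z => fderiv ℝ (cosProd μ y) z (EuclideanSpace.single k 1)) x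
      (EuclideanSpace.single k 1) = -μ ^ 2 * cosProd μ y x := by
  have hcos (i : ι) (t : ℝ) :
      HasDerivAt (fun t => cos (μ * (t - y i))) (-μ * sin (μ * (t - y i))) t :=
    (((hasDerivAt_id' t).sub_const (y i)).const_mul μ).cos.congr_deriv (by ring)
  have hsin (i : ι) (t : ℝ) :
      HasDerivAt (fun t => -μ * sin (μ * (t - y i))) (-μ ^ 2 * cos (μ * (t - y i))) t :=
    ((((hasDerivAt_id' t).sub_const (y i)).const_mul μ).sin.const_mul (-μ)).congr_deriv
      (by ring)
  have hfirst : (fun z => fderiv ℝ (cosProd μ y) z (EuclideanSpace.single k 1)) =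
      fun z : EuclideanSpace ℝ ι =>
        ∏ i, update (fun i t => cos (μ * (t - y i))) k (fun t => -μ * sin (μ * (t - y k))) i
          (z i) :=
    funext (fderiv_prod_comp_apply_single hcos · k)
  have hupdate (i : ι) (t : ℝ) :
      HasDerivAt
        (update (fun i t => cos (μ * (t - y i))) k (fun t => -μ * sin (μ * (t - y k))) i)
        (update (fun i t => -μ * sin (μ * (t - y i))) k
          (fun t => -μ ^ 2 * cos (μ * (t - y k))) i t) t := by
    rcases eq_or_ne i k with rfl | hik
    · simpa using hsin i t
    · simpa [hik] using hcos i t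
  rw [hfirst, fderiv_prod_comp_apply_single hupdate, update_idem, update_self,
    prod_update_apply_eq_mul_prod_erase, cosProd,
    ← Finset.mul_prod_erase _ _ (Finset.mem_univ k)]
  ring

end ProductOfCosines

section Cube

variable {ι : Type*}

def cube (y : EuclideanSpace ℝ ι) (a : ℝ) : Set (EuclideanSpace ℝ ι) :=
  {x | ∀ i, |x i - y i| ≤ a}

theorem mem_cube_self {y : EuclideanSpace ℝ ι} {a : ℝ} (ha : 0 ≤ a) : y ∈ cube y a := by
  simp [cube, ha]

theorem cube_subset_closedBall [Fintype ι] (y : EuclideanSpace ℝ ι) {a : ℝ} (ha : 0 ≤ a) :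
    cube y a ⊆ closedBall y (√(Fintype.card ι) * a) := by
  intro x hx
  rw [mem_closedBall, EuclideanSpace.dist_eq, ← sqrt_sq ha, ← sqrt_mul (Nat.cast_nonneg _)]
  refine sqrt_le_sqrt ?_
  calc ∑ i, dist (x i) (y i) ^ 2 ≤ ∑ _i : ι, a ^ 2 :=
        Finset.sum_le_sum fun i _ => pow_le_pow_left₀ (abs_nonneg _) (hx i) 2
    _ = Fintype.card ι * a ^ 2 := by simp

theorem isClosed_cube (y : EuclideanSpace ℝ ι) (a : ℝ) : IsClosed (cube y a) := by
  simp only [cube, ofPred_forall]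
  exact isClosed_iInter fun i => isClosed_le (by fun_prop) continuous_const

theorem isCompact_cube [Fintype ι] (y : EuclideanSpace ℝ ι) {a : ℝ} (ha : 0 ≤ a) :
    IsCompact (cube y a) :=
  (isCompact_closedBall y _).of_isClosed_subset (isClosed_cube y a) (cube_subset_closedBall y ha)

theorem convex_cube (y : EuclideanSpace ℝ ι) (a : ℝ) : Convex ℝ (cube y a) := by
  simp only [cube, ofPred_forall]
  exact convex_iInter fun i =>
    (convex_closedBall (y i) a).linear_preimage (EuclideanSpace.proj (𝕜 := ℝ) i).toLinearMap

theorem cube_mem_nhds [Finite ι] {y x : EuclideanSpace ℝ ι} {a : ℝ}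
    (hx : ∀ i, |x i - y i| < a) : cube y a ∈ 𝓝 x := by
  have hcont (i : ι) : ContinuousAt (fun z : EuclideanSpace ℝ ι => |z i - y i|) x := by fun_prop
  filter_upwards [eventually_all.2 fun i => (hcont i).eventually (gt_mem_nhds (hx i))]
    with z hz i using (hz i).le

end Cube

theorem exists_isLocalMin_touching_cosProd {ι : Type*} [Fintype ι]
    {u : EuclideanSpace ℝ ι → ℝ} {μ : ℝ} (hμ : 0 < μ) {y : EuclideanSpace ℝ ι}
    (hu : ContinuousOn u (cube y (π / (2 * μ)))) (hpos : ∀ x ∈ cube y (π / (2 * μ)), 0 < u x) :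
    ∃ x, (∀ i, |x i - y i| < π / (2 * μ)) ∧
      IsLocalMin (fun z => cosProd μ y x * u z - u x * cosProd μ y z) x := by
  have ha : 0 ≤ π / (2 * μ) := by positivity
  obtain ⟨x, hxQ, hmax⟩ := (isCompact_cube y ha).exists_isMaxOn ⟨y, mem_cube_self ha⟩
    (((contDiff_cosProd μ y).continuous.continuousOn).div hu fun x hx => (hpos x hx).ne')
  have hratio : 0 < cosProd μ y x / u x :=
    (div_pos (by simp [cosProd_self]) (hpos y (mem_cube_self ha))).trans_le
      (hmax (mem_cube_self ha))
  have hinterior (i : ι) : |x i - y i| < π / (2 * μ) := by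
    refine (hxQ i).lt_of_ne fun hi => hratio.ne' ?_
    rw [cosProd_eq_zero hμ hi, zero_div]
  refine ⟨x, hinterior, Filter.mem_of_superset (cube_mem_nhds hinterior) fun z hz => ?_⟩
  have hle := (div_le_div_iff₀ (hpos z hz) (hpos x hxQ)).1 (hmax hz)
  simp only [mem_ofPred_eq]
  nlinarith

lemma IsEigenfunctionOn.neg {n : ℕ} {u : EuclideanSpace ℝ (Fin n) → ℝ}
    {s : Set (EuclideanSpace ℝ (Fin n))} {lam : ℝ} (h : IsEigenfunctionOn u s lam) :
    IsEigenfunctionOn (fun x => -u x) s lam := by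
  refine ⟨h.1.neg, fun x hx => ?_⟩
  simp only [fderiv_fun_neg, neg_apply, Finset.sum_neg_distrib]
  linarith [h.2 x hx]

theorem IsEigenfunctionOn.not_forall_pos_on_cube {n : ℕ} {u : EuclideanSpace ℝ (Fin n) → ℝ}
    {s : Set (EuclideanSpace ℝ (Fin n))} {lam μ : ℝ} (hu : IsEigenfunctionOn u s lam)
    (hs : IsOpen s) (hμ : 0 < μ) (hlam : n * μ ^ 2 < lam) {y : EuclideanSpace ℝ (Fin n)}
    (hsub : cube y (π / (2 * μ)) ⊆ s) : ¬ ∀ x ∈ cube y (π / (2 * μ)), 0 < u x := by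
  intro hpos
  obtain ⟨x, hx, hmin⟩ :=
    exists_isLocalMin_touching_cosProd hμ (hu.1.continuousOn.mono hsub) hpos
  have hxQ : x ∈ cube y (π / (2 * μ)) := fun i => (hx i).le
  have hu2 : ContDiffAt ℝ 2 u x := hu.1.contDiffAt (hs.mem_nhds (hsub hxQ))
  have hw2 : ContDiffAt ℝ 2 (cosProd μ y) x := (contDiff_cosProd μ y).contDiffAt
  have hpartial (i : Fin n) : 0 ≤
      cosProd μ y x * fderiv ℝ (fun z => fderiv ℝ u z (EuclideanSpace.single i 1)) x
        (EuclideanSpace.single i 1) - u x * (-μ ^ 2 * cosProd μ y x) := by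
    rw [← cosProd_second_partial, ← fderiv_fderiv_apply_const_mul_sub hu2 hw2]
    exact hmin.fderiv_fderiv_apply_nonneg
      ((contDiffAt_const.mul hu2).sub (contDiffAt_const.mul hw2)) _
  have hsum := Finset.sum_nonneg fun i (_ : i ∈ Finset.univ) => hpartial i
  rw [Finset.sum_sub_distrib, ← Finset.mul_sum, Finset.sum_const, Finset.card_univ,
    Fintype.card_fin, nsmul_eq_mul, eq_neg_of_add_eq_zero_left (hu.2 x (hsub hxQ))] at hsum
  nlinarith [mul_pos (mul_pos (hpos x hxQ) (cosProd_pos hμ hx)) (sub_pos.2 hlam)]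

theorem IsPreconnected.forall_pos_or_forall_neg {X : Type*} [TopologicalSpace X] {S : Set X}
    (hS : IsPreconnected S) {f : X → ℝ} (hf : ContinuousOn f S) (hne : ∀ x ∈ S, f x ≠ 0) :
    (∀ x ∈ S, 0 < f x) ∨ ∀ x ∈ S, f x < 0 := by
  by_contra! ⟨⟨a, ha, hfa⟩, ⟨b, hb, hfb⟩⟩
  obtain ⟨c, hc, hfc⟩ := hS.intermediate_value ha hb hf ⟨hfa, hfb⟩
  exact hne c hc hfc

theorem IsEigenfunctionOn.exists_zero_mem_cube {n : ℕ} {u : EuclideanSpace ℝ (Fin n) → ℝ}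
    {s : Set (EuclideanSpace ℝ (Fin n))} {lam μ : ℝ} (hu : IsEigenfunctionOn u s lam)
    (hs : IsOpen s) (hμ : 0 < μ) (hlam : n * μ ^ 2 < lam) {y : EuclideanSpace ℝ (Fin n)}
    (hsub : cube y (π / (2 * μ)) ⊆ s) : ∃ x ∈ cube y (π / (2 * μ)), u x = 0 := by
  by_contra! hne
  rcases (convex_cube y _).isPreconnected.forall_pos_or_forall_neg
    (hu.1.continuousOn.mono hsub) hne with hpos | hneg
  · exact hu.not_forall_pos_on_cube hs hμ hlam hsub hpos
  · exact hu.neg.not_forall_pos_on_cube hs hμ hlam hsub fun x hx => neg_pos.2 (hneg x hx)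

theorem zero_set_dense_general (n : ℕ) (x₀ : EuclideanSpace ℝ (Fin n)) (R : ℝ) :
    ∃ C₁ : ℝ, 0 < C₁ ∧ ∃ lam₀ : ℝ, 0 < lam₀ ∧
      ∀ lam : ℝ, lam₀ < lam →
        ∀ u : EuclideanSpace ℝ (Fin n) → ℝ,
          IsEigenfunctionOn u (ball x₀ R) lam →
          (¬ ∀ x ∈ ball x₀ R, u x = 0) →
          ∀ y ∈ ball x₀ (R - C₁ / Real.sqrt lam),
            ∃ z ∈ ball x₀ R, u z = 0 ∧ dist y z ≤ C₁ / Real.sqrt lam := by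
  refine ⟨π * (n + 1) ^ 2 / 2, by positivity, 1, one_pos, fun lam hlam u hu _ y hy => ?_⟩
  have hlam₀ : 0 < lam := one_pos.trans hlam
  set μ := √lam / (n + 1) with hμ_def
  have hμ : 0 < μ := by positivity
  have hμlam : n * μ ^ 2 < lam := by
    rw [hμ_def, div_pow, sq_sqrt hlam₀.le, mul_div_assoc', div_lt_iff₀ (by positivity)]
    nlinarith [mul_lt_mul_of_pos_left (show (n : ℝ) < (n + 1) ^ 2 by nlinarith) hlam₀]
  have hside : π / (2 * μ) = (n + 1) * (π / (2 * √lam)) := by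
    rw [hμ_def]
    field_simp
  have hcube : cube y (π / (2 * μ)) ⊆ closedBall y (π * (n + 1) ^ 2 / 2 / √lam) := by
    refine (cube_subset_closedBall y (by positivity)).trans (closedBall_subset_closedBall ?_)
    calc √(Fintype.card (Fin n)) * (π / (2 * μ)) = √n * ((n + 1) * (π / (2 * √lam))) := by
          rw [Fintype.card_fin, hside]
      _ ≤ (n + 1) * ((n + 1) * (π / (2 * √lam))) := by
          gcongr
          exact sqrt_le_iff.2 ⟨by positivity, by nlinarith⟩
      _ = π * (n + 1) ^ 2 / 2 / √lam := by ring
  have hsub : cube y (π / (2 * μ)) ⊆ ball x₀ R :=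
    hcube.trans (closedBall_subset_ball' (by linarith [mem_ball.1 hy]))
  obtain ⟨z, hz, huz⟩ := hu.exists_zero_mem_cube isOpen_ball hμ hμlam hsub
  exact ⟨z, hsub hz, huz, mem_closedBall'.1 (hcube hz)⟩

/-- Density of the zero set of an eigenfunction: there are `C₁, λ₀ > 0` depending only on
the ball `B = B(x₀,R)` such that for `λ > λ₀` and any nonzero solution of `Δu + λu = 0`
on `B`, the zero set of `u` is `C₁/√λ`-dense in `B`: every point of `B` at distance more
than `C₁/√λ` from the boundary lies within distance `C₁/√λ` of a zero of `u`. -/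
theorem zero_set_dense (n : ℕ) (x₀ : EuclideanSpace ℝ (Fin n)) (R : ℝ) (hR : 0 < R) :
    ∃ C₁ : ℝ, 0 < C₁ ∧ ∃ lam₀ : ℝ, 0 < lam₀ ∧
      ∀ lam : ℝ, lam₀ < lam →
        ∀ u : EuclideanSpace ℝ (Fin n) → ℝ,
          IsEigenfunctionOn u (ball x₀ R) lam →
          (¬ ∀ x ∈ ball x₀ R, u x = 0) →
          ∀ y ∈ ball x₀ (R - C₁ / Real.sqrt lam),
            ∃ z ∈ ball x₀ R, u z = 0 ∧ dist y z ≤ C₁ / Real.sqrt lam :=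
  zero_set_dense_general n x₀ R
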